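/- Let ν : ℝ → ℝ be defined by ν(x) = 0 for x ≤ 0, ν(x) = x for 0 ≤ x ≤ 1, and ν(x) = 1 for x ≥ 1, and let Φ : ℝ → ℝ be the Meyer scaling function in the frequency domain, defined by Φ(ω) = 1/√(2π) if |ω| ≤ 2π/3, Φ(ω) = (1/√(2π))·cos((π/2)·ν(3|ω|/(2π) − 1)) if 2π/3 ≤ |ω| ≤ 4π/3, and Φ(ω) = 0 if |ω| ≥ 4π/3. Then for every ω ∈ ℝ, the sum over all integers k of |Φ(ω + 2πk)|² equals 1/(2π). -/

import Mathlib

/-!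
In the transition band `Φ(ω) = sin(3|ω|/4)/√(2π)`, so for `x + y = 2π` with `x, y ≥ 0` the squares
`Φ(x)² + Φ(y)²` add up to `1/(2π)`: either one of the two points lies in the flat part and the other
outside the support, or both lie in the band and the two sines are `sin(3x/4)` and `±cos(3x/4)`.
After reducing `ω` modulo `2π` into `[0, 2π)`, only the terms `k = 0` and `k = -1` of the series
survive, and they form such a pair.
-/

open Real

/-- The auxiliary function ν: ν(x) = 0 for x ≤ 0, ν(x) = x for 0 ≤ x ≤ 1,
ν(x) = 1 for x ≥ 1. -/
noncomputable def meyerNu (x : ℝ) : ℝ :=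
  if x ≤ 0 then 0 else if x ≤ 1 then x else 1

/-- The Meyer scaling function in the frequency domain:
Φ(ω) = 1/√(2π) if |ω| ≤ 2π/3,
Φ(ω) = (1/√(2π))·cos((π/2)·ν(3|ω|/(2π) − 1)) if 2π/3 ≤ |ω| ≤ 4π/3,
Φ(ω) = 0 if |ω| ≥ 4π/3. -/
noncomputable def meyerPhi (ω : ℝ) : ℝ :=
  if |ω| ≤ 2 * π / 3 then 1 / Real.sqrt (2 * π)
  else if |ω| ≤ 4 * π / 3 then
    (1 / Real.sqrt (2 * π)) * Real.cos ((π / 2) * meyerNu (3 * |ω| / (2 * π) - 1))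
  else 0

theorem tsum_add_mul_int_eq_tsum_toIcoMod {α : Type*} [AddCommMonoid α] [TopologicalSpace α]
    {p : ℝ} (hp : 0 < p) (f : ℝ → α) (a x : ℝ) :
    ∑' k : ℤ, f (x + p * k) = ∑' k : ℤ, f (toIcoMod hp a x + p * k) := by
  have hx : x = toIcoMod hp a x + p * toIcoDiv hp a x := by
    rw [mul_comm, ← zsmul_eq_mul, toIcoMod_add_toIcoDiv_zsmul]
  calc ∑' k : ℤ, f (x + p * k)
      = ∑' k : ℤ, f (toIcoMod hp a x + p * (Equiv.addLeft (toIcoDiv hp a x) k : ℤ)) := by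
        congr! 2 with k
        rw [Equiv.coe_addLeft, Int.cast_add]
        nth_rw 1 [hx]
        ring_nf
    _ = _ := (Equiv.addLeft (toIcoDiv hp a x)).tsum_eq fun k : ℤ ↦ f (toIcoMod hp a x + p * k)

lemma meyerNu_of_mem_Icc {x : ℝ} (hx : x ∈ Set.Icc 0 1) : meyerNu x = x := by
  rcases hx.1.eq_or_lt with rfl | hpos
  · simp [meyerNu]
  · simp [meyerNu, hpos.not_ge, hx.2]

lemma meyerPhi_neg (x : ℝ) : meyerPhi (-x) = meyerPhi x := by
  simp only [meyerPhi, abs_neg]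

lemma meyerPhi_of_abs_le {x : ℝ} (h : |x| ≤ 2 * π / 3) : meyerPhi x = 1 / √(2 * π) :=
  if_pos h

lemma meyerPhi_of_lt_abs {x : ℝ} (h : 4 * π / 3 < |x|) : meyerPhi x = 0 := by
  have hπ := pi_pos
  rw [meyerPhi, if_neg (by linarith), if_neg h.not_ge]

lemma meyerPhi_of_abs_mem_Icc {x : ℝ} (h : |x| ∈ Set.Icc (2 * π / 3) (4 * π / 3)) :
    meyerPhi x = sin (3 * |x| / 4) / √(2 * π) := by
  have hπ := pi_pos
  unfold meyerPhi
  split_ifs with hflat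
  · have hx : |x| = 2 * π / 3 := le_antisymm hflat h.1
    rw [hx, show 3 * (2 * π / 3) / 4 = π / 2 by ring, sin_pi_div_two]
  · have hν : 3 * |x| / (2 * π) - 1 ∈ Set.Icc 0 1 := by
      constructor
      · rw [sub_nonneg, le_div_iff₀ (by positivity)]; linarith [h.1]
      · rw [sub_le_iff_le_add, div_le_iff₀ (by positivity)]; linarith [h.2]
    rw [meyerNu_of_mem_Icc hν, ← cos_sub_pi_div_two]
    field_simp
    ring_nf
  · exact absurd h.2 ‹_›

lemma one_div_sqrt_two_pi_sq : (1 / √(2 * π)) ^ 2 = 1 / (2 * π) := by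
  rw [div_pow, one_pow, sq_sqrt two_pi_pos.le]

lemma meyerPhi_sq_add_sq_of_add_eq_two_pi {x y : ℝ} (hx : 0 ≤ x) (hy : 0 ≤ y)
    (hxy : x + y = 2 * π) : meyerPhi x ^ 2 + meyerPhi y ^ 2 = 1 / (2 * π) := by
  wlog hle : x ≤ y generalizing x y
  · rw [add_comm]
    exact this hy hx (by linarith) (by linarith)
  have hπ := pi_pos
  rcases lt_or_ge x (2 * π / 3) with hflat | hband
  · rw [meyerPhi_of_abs_le (by rw [abs_of_nonneg hx]; linarith),
      meyerPhi_of_lt_abs (by rw [abs_of_nonneg hy]; linarith), one_div_sqrt_two_pi_sq]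
    ring
  · rw [meyerPhi_of_abs_mem_Icc (by rw [abs_of_nonneg hx]; constructor <;> linarith),
      meyerPhi_of_abs_mem_Icc (by rw [abs_of_nonneg hy]; constructor <;> linarith),
      abs_of_nonneg hx, abs_of_nonneg hy]
    have hsin : sin (3 * y / 4) = -cos (3 * x / 4) := by
      rw [show 3 * y / 4 = π - (3 * x / 4 - π / 2) by linarith, sin_pi_sub, sin_sub_pi_div_two]
    rw [hsin, div_pow, div_pow, neg_sq, ← add_div, sin_sq_add_cos_sq, sq_sqrt two_pi_pos.le]

lemma meyerPhi_add_two_pi_mul_int_eq_zero {x : ℝ} (hx : x ∈ Set.Ico 0 (2 * π)) {k : ℤ}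
    (hk : k ∉ ({-1, 0} : Finset ℤ)) : meyerPhi (x + 2 * π * k) = 0 := by
  have hπ := pi_pos
  simp only [Finset.mem_insert, Finset.mem_singleton, not_or] at hk
  apply meyerPhi_of_lt_abs
  rcases le_or_gt k (-2) with hneg | hpos
  · have hk' : (k : ℝ) ≤ -2 := by exact_mod_cast hneg
    rw [abs_of_neg (by nlinarith [hx.2])]
    nlinarith [hx.2]
  · have hk' : (1 : ℝ) ≤ k := by exact_mod_cast (show 1 ≤ k by omega)
    rw [abs_of_pos (by nlinarith [hx.1])]
    nlinarith [hx.1]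

/-- For every ω ∈ ℝ, the sum over all integers k of |Φ(ω + 2πk)|²
equals 1/(2π). -/
theorem meyerPhi_partition_of_unity (ω : ℝ) :
    ∑' k : ℤ, |meyerPhi (ω + 2 * π * k)| ^ 2 = 1 / (2 * π) := by
  simp only [sq_abs]
  rw [tsum_add_mul_int_eq_tsum_toIcoMod two_pi_pos (fun y ↦ meyerPhi y ^ 2) 0 ω]
  have hx : toIcoMod two_pi_pos 0 ω ∈ Set.Ico 0 (2 * π) := toIcoMod_mem_Ico' two_pi_pos ω
  set x := toIcoMod two_pi_pos 0 ω
  rw [tsum_eq_sum (s := {-1, 0}) fun k hk ↦ by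
    rw [meyerPhi_add_two_pi_mul_int_eq_zero hx hk, zero_pow two_ne_zero]]
  rw [Finset.sum_pair (by decide), Int.cast_neg, Int.cast_one, Int.cast_zero, mul_zero, add_zero,
    ← meyerPhi_neg, add_comm]
  exact meyerPhi_sq_add_sq_of_add_eq_two_pi hx.1 (by linarith [hx.2]) (by ring)
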